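/- Let G be a group and n ≥ 1. Define two functions η, η' : ZMod n → G to be cohomologous if there exists ξ : ZMod n → G with η'(i) = ξ(i)⁻¹ · η(i) · ξ(i+1) for all i. Then η and η' are cohomologous if and only if their holonomy products η(0)η(1)⋯η(n-1) and η'(0)η'(1)⋯η'(n-1) are conjugate in G. -/
import Mathlib


/-- Two 1-cochains on the `n`-cycle are cohomologous
(`η'(i) = ξ(i)⁻¹ η(i) ξ(i+1)`) iff their holonomy products are conjugate. -/
theorem stmt_13 (n : ℕ) (hn : 1 ≤ n) (G : Type*) [Group G] (η η' : ZMod n → G) :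
    (∃ ξ : ZMod n → G, ∀ i : ZMod n, η' i = (ξ i)⁻¹ * η i * ξ (i + 1)) ↔
      IsConj (((List.range n).map (fun i => η (i : ZMod n))).prod)
        (((List.range n).map (fun i => η' (i : ZMod n))).prod) := by
  haveI : NeZero n := ⟨by omega⟩
  rw [isConj_iff]
  set P : ℕ → G := fun k => ((List.range k).map (fun i => η (i : ZMod n))).prod with hP
  set P' : ℕ → G := fun k => ((List.range k).map (fun i => η' (i : ZMod n))).prod with hP'
  have hPs : ∀ k, P (k + 1) = P k * η (k : ZMod n) := by
    intro k; simp [hP, List.range_succ]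
  have hPs' : ∀ k, P' (k + 1) = P' k * η' (k : ZMod n) := by
    intro k; simp [hP', List.range_succ]
  have hP0 : P 0 = 1 := by simp [hP]
  have hP0' : P' 0 = 1 := by simp [hP']
  have hcast : ∀ i : ZMod n, ((i.val : ℕ) : ZMod n) = i := fun i => ZMod.natCast_rightInverse i
  constructor
  · rintro ⟨ξ, hξ⟩
    have key : ∀ k, P' k = (ξ 0)⁻¹ * P k * ξ (k : ZMod n) := by
      intro k
      induction k with
      | zero => simp [hP0, hP0']
      | succ k ih =>
        rw [hPs, hPs', ih, hξ (k : ZMod n)]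
        push_cast
        group
    refine ⟨(ξ 0)⁻¹, ?_⟩
    show (ξ 0)⁻¹ * P n * ((ξ 0)⁻¹)⁻¹ = P' n
    have := key n
    rw [ZMod.natCast_self] at this
    rw [this]; group
  · rintro ⟨c, hcc⟩
    have hc : c * P n * c⁻¹ = P' n := hcc
    refine ⟨fun i => (P i.val)⁻¹ * c⁻¹ * P' i.val, fun i => ?_⟩
    simp only
    by_cases h : i.val + 1 < n
    · have h1 : (1 : ZMod n).val = 1 := by rw [ZMod.val_one_eq_one_mod]; exact Nat.mod_eq_of_lt (by omega)
      have hv : (i + 1).val = i.val + 1 := by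
        rw [ZMod.val_add, h1, Nat.mod_eq_of_lt h]
      rw [hv, hPs, hPs', hcast]
      group
    · have hvn : i.val + 1 = n := by have := i.val_lt; omega
      have h0 : i + 1 = 0 := by
        have h2 : ((i.val + 1 : ℕ) : ZMod n) = 0 := by rw [hvn, ZMod.natCast_self]
        rw [← hcast i]; push_cast at h2 ⊢; exact h2
      rw [h0, ZMod.val_zero, hP0, hP0']
      have hPn : P n = P i.val * η i := by
        conv_lhs => rw [← hvn]
        rw [hPs, hcast]
      have hPn' : P' n = P' i.val * η' i := by
        conv_lhs => rw [← hvn]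
        rw [hPs', hcast]
      rw [hPn, hPn'] at hc
      have : η' i = (P' i.val)⁻¹ * (c * (P i.val * η i) * c⁻¹) := by rw [hc]; group
      rw [this]; group
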